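/- For all integers s, t, m ∈ ℤ and n ∈ ℤ_{≥0}, the following identity holds: Σ_{ℓ ≤ s} q_ℓ^{[m]}(x|b) · (e_{t−ℓ}^{[−n−1]}(τ^{−m}b))^⋆ = q_s^{[m−1]}(x|b) · (e_{t−s}^{[−n−1]}(τ^{−m}b))^⋆ + Σ_{ℓ ≤ s−1} q_ℓ^{[m−1]}(x|b) · (e_{t−ℓ}^{[−n]}(τ^{1−m}b))^⋆, where ⋆ is the substitution b_{−i} ↦ −b_{i+1} for all i ≥ 0; all sums are finite since q_ℓ = 0 for ℓ < 0. The identity holds for every number of x-variables. -/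

import Mathlib

open Finset

noncomputable section

variable {R : Type*} [CommRing R]

/-- The formal power series `1/(1 - x·u)`. -/
def geomSeries (x : R) : PowerSeries R := PowerSeries.mk fun m => x ^ m

/-- `e_u^{[k]}(c)`: the power series `∏_{i=1}^k (1 + c_i u)` for `k ≥ 0`, and
`∏_{i=1}^{-k} (1 - c_i u)⁻¹` for `k < 0`.  The sequence `c` is read at indices `1, 2, …`. -/
def eSer (k : ℤ) (c : ℕ → R) : PowerSeries R :=
  if 0 ≤ k then ∏ i ∈ Finset.range k.toNat, (1 + PowerSeries.C (R := R) (c (i + 1)) * PowerSeries.X)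
  else ∏ i ∈ Finset.range (-k).toNat, geomSeries (c (i + 1))

/-- `q_u(x) = ∏_{i=1}^n (1 + x_i u)/(1 - x_i u)`, with `n` x-variables. -/
def qSer (n : ℕ) (x : ℕ → R) : PowerSeries R :=
  ∏ i ∈ Finset.range n,
    ((1 + PowerSeries.C (R := R) (x (i + 1)) * PowerSeries.X) * geomSeries (x (i + 1)))

/-- The coefficient of `u^m` (`m : ℤ`) of a power series; zero when `m < 0`. -/
def coeffZ (m : ℤ) (φ : PowerSeries R) : R :=
  if 0 ≤ m then PowerSeries.coeff (R := R) m.toNat φ else 0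

/-- `q_m^{[ℓ]}(x|c)`: the coefficient of `u^m` in `q_u(x)·e_u^{[ℓ]}(c)`. -/
def qC (m ℓ : ℤ) (n : ℕ) (x c : ℕ → R) : R := coeffZ m (qSer n x * eSer ℓ c)

/-- `q_m^{[k|ℓ]}(x;z|c)`: the coefficient of `u^m` in `q_u(x)·e_u^{[k]}(z)·e_u^{[ℓ]}(c)`. -/
def qC2 (m k ℓ : ℤ) (n : ℕ) (x z c : ℕ → R) : R :=
  coeffZ m (qSer n x * eSer k z * eSer ℓ c)

/-- `e_m^{[k]}(c)`. -/
def eC (m k : ℤ) (c : ℕ → R) : R := coeffZ m (eSer k c)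

/-- `e_m^{[k|ℓ]}(z|c)`: the coefficient of `u^m` in `e_u^{[k]}(z)·e_u^{[ℓ]}(c)`. -/
def eC2 (m k ℓ : ℤ) (z c : ℕ → R) : R := coeffZ m (eSer k z * eSer ℓ c)

/-- Extension of `b` to all integer indices using the convention `b_{-i} = -b_{i+1}` for
`i ≥ 0`; positive indices are untouched.  This also implements the `⋆` substitution. -/
def bext (b : ℤ → R) : ℤ → R := fun j => if 0 < j then b j else -b (1 - j)

/-- `ε(0) = 1` and `ε(m) = 2·(-1)^m` for `m ≥ 1`. -/
def pfEps (m : ℕ) : ℤ := if m = 0 then 1 else 2 * (-1) ^ m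

/-- The subscript `α_i + Σ_{j>i} m_{ij} − Σ_{j<i} m_{ji}` in the Schur–Pfaffian. -/
def pfIdx {r : ℕ} (α : Fin r → ℤ) (m : Fin r → Fin r → ℕ) (i : Fin r) : ℤ :=
  α i + ∑ j, (if i < j then (m i j : ℤ) else 0) - ∑ j, (if j < i then (m j i : ℤ) else 0)

/-- The Schur–Pfaffian `Pf[c^{(1)}_{α_1} ⋯ c^{(r)}_{α_r}]`, as the (finitely supported) sum
over tuples of nonnegative integers `(m_{ij})_{1 ≤ i < j ≤ r}`. -/
def schurPf {r : ℕ} (c : Fin r → ℤ → R) (α : Fin r → ℤ) : R :=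
  ∑ᶠ m ∈ {m : Fin r → Fin r → ℕ | ∀ i j, ¬ i < j → m i j = 0},
    (∏ i, ∏ j, if i < j then (pfEps (m i j) : R) else 1) * ∏ i, c i (pfIdx α m i)

/-- The alphabet of primed, unmarked and circled numbers. -/
inductive MSTEntry where
  | prime : ℕ → MSTEntry
  | unmarked : ℕ → MSTEntry
  | circ : ℕ → MSTEntry
deriving DecidableEq

namespace MSTEntry

/-- Whether an entry is circled (`1`) or not (`0`). -/
def isCirc : MSTEntry → ℕ
  | circ _ => 1
  | _ => 0

/-- Key realizing the order `1' < 1 < 2' < 2 < ⋯` within each class. -/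
def key : MSTEntry → ℕ
  | prime k => 2 * k - 1
  | unmarked k => 2 * k
  | circ k => k

/-- The numeric value of an entry. -/
def val : MSTEntry → ℕ
  | prime k => k
  | unmarked k => k
  | circ k => k

/-- The total order `1' < 1 < 2' < 2 < ⋯ < 1° < 2° < ⋯` on entries of positive value. -/
def le (a b : MSTEntry) : Prop :=
  a.isCirc < b.isCirc ∨ (a.isCirc = b.isCirc ∧ a.key ≤ b.key)

end MSTEntry

/-- The shifted Young diagram of a strict partition `λ` of length `r`:
boxes `(i, j)` with `1 ≤ i ≤ r` and `i ≤ j ≤ λ_i + i - 1` (rows and columns 1-indexed). -/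
def shiftedDiag (r : ℕ) (lam : ℕ → ℕ) : Set (ℕ × ℕ) :=
  {p | 1 ≤ p.1 ∧ p.1 ≤ r ∧ p.1 ≤ p.2 ∧ p.2 ≤ lam p.1 + p.1 - 1}

/-- `T` is a marked shifted tableau of the flagged strict partition `(λ, f)` whose unmarked
and primed entries have numeric value at most `n` (normalized to `unmarked 0` off the
diagram). -/
def IsMST (n r : ℕ) (lam f : ℕ → ℕ) (T : ℕ × ℕ → MSTEntry) : Prop :=
  (∀ p, p ∉ shiftedDiag r lam → T p = .unmarked 0) ∧
  (∀ p ∈ shiftedDiag r lam, 1 ≤ (T p).val) ∧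
  (∀ i j j', (i, j) ∈ shiftedDiag r lam → (i, j') ∈ shiftedDiag r lam → j ≤ j' →
    (T (i, j)).le (T (i, j'))) ∧
  (∀ i i' j, (i, j) ∈ shiftedDiag r lam → (i', j) ∈ shiftedDiag r lam → i ≤ i' →
    (T (i, j)).le (T (i', j))) ∧
  (∀ i i' j k k', (i, j) ∈ shiftedDiag r lam → (i', j) ∈ shiftedDiag r lam → i < i' →
    T (i, j) = .unmarked k → T (i', j) = .unmarked k' → k < k') ∧
  (∀ i j j' k k', (i, j) ∈ shiftedDiag r lam → (i, j') ∈ shiftedDiag r lam → j < j' →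
    T (i, j) = .prime k → T (i, j') = .prime k' → k < k') ∧
  (∀ i j j' k k', (i, j) ∈ shiftedDiag r lam → (i, j') ∈ shiftedDiag r lam → j < j' →
    T (i, j) = .circ k → T (i, j') = .circ k' → k < k') ∧
  (∀ p ∈ shiftedDiag r lam, (T p).le (.circ (f p.1))) ∧
  (∀ p ∈ shiftedDiag r lam, ∀ k, (T p = .unmarked k ∨ T p = .prime k) → k ≤ n)

/-- The factor of the weight `(xz|b)^T` contributed by the entry at box `p`.  The convention
`b_{-i} = -b_{i+1}` is implemented by `bext`. -/
def mstFactor (x z : ℕ → R) (b : ℤ → R) (p : ℕ × ℕ) : MSTEntry → R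
  | .unmarked k => x k + bext b ((p.2 : ℤ) - (p.1 : ℤ))
  | .prime k => x k - bext b ((p.2 : ℤ) - (p.1 : ℤ))
  | .circ k => z k + bext b ((k : ℤ) + (p.1 : ℤ) - (p.2 : ℤ))

/-- The weight `(xz|b)^T` of a marked shifted tableau. -/
def mstWeight (r : ℕ) (lam : ℕ → ℕ) (x z : ℕ → R) (b : ℤ → R) (T : ℕ × ℕ → MSTEntry) : R :=
  ∏ i ∈ Finset.range r, ∏ j ∈ Finset.range (lam (i + 1)),
    mstFactor x z b (i + 1, i + 1 + j) (T (i + 1, i + 1 + j))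

/-- The flagged factorial Q-function `Q_{λ,f}(x;z|b)`, with `n` x-variables. -/
def Qflag (n r : ℕ) (lam f : ℕ → ℕ) (x z : ℕ → R) (b : ℤ → R) : R :=
  ∑ᶠ T ∈ {T : ℕ × ℕ → MSTEntry | IsMST n r lam f T}, mstWeight r lam x z b T

/-- Ivanov's factorial Q-function `Q_λ(x|b)`: the case of the zero flag (no circled
entries, so the z-variables do not occur). -/
def QIvanov (n r : ℕ) (lam : ℕ → ℕ) (x : ℕ → R) (b : ℤ → R) : R :=
  Qflag n r lam (fun _ => 0) x (fun _ => 0) b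

/-- The skew Young diagram `κ/ν`: boxes `(i, j)` with `1 ≤ i ≤ r`, `ν_i < j ≤ κ_i`. -/
def skewDiag (r : ℕ) (kap nu : ℕ → ℕ) : Set (ℕ × ℕ) :=
  {p | 1 ≤ p.1 ∧ p.1 ≤ r ∧ nu p.1 < p.2 ∧ p.2 ≤ kap p.1}

/-- `t` is a row-strict flagged tableau of `(κ/ν, f)` (normalized to `0` off the diagram). -/
def IsRST (r : ℕ) (kap nu f : ℕ → ℕ) (t : ℕ × ℕ → ℕ) : Prop :=
  (∀ p, p ∉ skewDiag r kap nu → t p = 0) ∧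
  (∀ p ∈ skewDiag r kap nu, 1 ≤ t p) ∧
  (∀ i j j', (i, j) ∈ skewDiag r kap nu → (i, j') ∈ skewDiag r kap nu → j < j' →
    t (i, j) < t (i, j')) ∧
  (∀ i i' j, (i, j) ∈ skewDiag r kap nu → (i', j) ∈ skewDiag r kap nu → i ≤ i' →
    t (i, j) ≤ t (i', j)) ∧
  (∀ p ∈ skewDiag r kap nu, t p ≤ f p.1)

/-- The weight `∏_{e ∈ T} (z_{|e|} + b_{|e| + r(e) - c(e)})` of a row-strict flagged tableau. -/
def rstWeight (r : ℕ) (kap nu : ℕ → ℕ) (z : ℕ → R) (b : ℤ → R) (t : ℕ × ℕ → ℕ) : R :=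
  ∏ i ∈ Finset.range r, ∏ j ∈ Finset.range (kap (i + 1) - nu (i + 1)),
    (z (t (i + 1, nu (i + 1) + 1 + j)) +
      b ((t (i + 1, nu (i + 1) + 1 + j) : ℤ) + ((i : ℤ) + 1) - ((nu (i + 1) : ℤ) + 1 + (j : ℤ))))

/-- The row-strict flagged skew factorial Schur polynomial `s̃_{κ/ν,f}(z|b)`. -/
def sTilde (r : ℕ) (kap nu f : ℕ → ℕ) (z : ℕ → R) (b : ℤ → R) : R :=
  ∑ᶠ t ∈ {t : ℕ × ℕ → ℕ | IsRST r kap nu f t}, rstWeight r kap nu z b t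

/-! Uniformly in `m`, `e_u^{[m]}(b) = e_u^{[m-1]}(b) · (1 - β u)` with `β = b^⋆_{1-m}`: for `m ≥ 1`
this is the new factor `1 + b_m u`, for `m ≤ 0` the removed factor `(1 - b_{1-m} u)⁻¹`. Hence
`q_ℓ^{[m]} = q_ℓ^{[m-1]} - β q_{ℓ-1}^{[m-1]}`. Since the first variable of `(τ^{-m} b)^⋆` is again
`β`, likewise
`e_j^{[-n]}((τ^{1-m} b)^⋆) = e_j^{[-n-1]}((τ^{-m} b)^⋆) - β e_{j-1}^{[-n-1]}((τ^{-m} b)^⋆)`.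
The identity is then summation by parts; there is no lower boundary term because `q_ℓ = 0`
for `ℓ < 0`. -/

open PowerSeries

lemma geomSeries_eq_rescale (a : R) : geomSeries a = rescale a (mk 1) := by
  simp [geomSeries, rescale_mk]

lemma one_sub_C_mul_X_mul_geomSeries (a : R) : (1 - C a * X) * geomSeries a = 1 := by
  rw [geomSeries_eq_rescale, ← rescale_X, ← map_one (rescale a), ← map_sub, ← map_mul,
    mul_comm, mk_one_mul_one_sub_eq_one, map_one]

lemma geomSeries_mul_one_sub_C_mul_X (a : R) : geomSeries a * (1 - C a * X) = 1 := by
  rw [mul_comm, one_sub_C_mul_X_mul_geomSeries]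

lemma coeffZ_sub (j : ℤ) (φ ψ : R⟦X⟧) : coeffZ j (φ - ψ) = coeffZ j φ - coeffZ j ψ := by
  unfold coeffZ; split_ifs <;> simp

lemma coeffZ_C_mul (j : ℤ) (a : R) (φ : R⟦X⟧) : coeffZ j (C a * φ) = a * coeffZ j φ := by
  unfold coeffZ; split_ifs <;> simp

lemma coeffZ_X_mul (j : ℤ) (φ : R⟦X⟧) : coeffZ j (X * φ) = coeffZ (j - 1) φ := by
  rcases le_or_gt j 0 with hj | hj
  · rcases hj.lt_or_eq with hj | rfl
    · rw [coeffZ, coeffZ, if_neg (by omega), if_neg (by omega)]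
    · simp [coeffZ]
  · obtain ⟨k, rfl⟩ : ∃ k : ℕ, j = k + 1 := ⟨j.toNat - 1, by omega⟩
    simp [coeffZ, coeff_succ_X_mul, show ((k : ℤ) + 1).toNat = k + 1 by omega]
    omega

lemma coeffZ_one_sub_C_mul_X_mul (j : ℤ) (a : R) (φ : R⟦X⟧) :
    coeffZ j ((1 - C a * X) * φ) = coeffZ j φ - a * coeffZ (j - 1) φ := by
  rw [sub_mul, one_mul, mul_assoc, coeffZ_sub, coeffZ_C_mul, coeffZ_X_mul]

lemma eSer_natCast (k : ℕ) (c : ℕ → R) :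
    eSer k c = ∏ i ∈ range k, (1 + C (c (i + 1)) * X) := by
  simp [eSer]

lemma eSer_neg_natCast (k : ℕ) (c : ℕ → R) :
    eSer (-k) c = ∏ i ∈ range k, geomSeries (c (i + 1)) := by
  rcases k.eq_zero_or_pos with rfl | hk
  · simp [eSer]
  · rw [eSer, if_neg (by omega), neg_neg, Int.toNat_natCast]

lemma eSer_eq_eSer_sub_one_mul (m : ℤ) (b : ℤ → R) :
    eSer m (fun i => b i) = eSer (m - 1) (fun i => b i) * (1 - C (bext b (1 - m)) * X) := by
  rcases le_or_gt 1 m with hm | hm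
  · obtain ⟨k, rfl⟩ : ∃ k : ℕ, m = k + 1 := ⟨m.toNat - 1, by omega⟩
    have hb : bext b (1 - (k + 1)) = -b (k + 1) := by
      rw [bext, if_neg (by omega), sub_sub_cancel]
    rw [← Nat.cast_succ, eSer_natCast, Nat.cast_succ, add_sub_cancel_right, eSer_natCast,
      prod_range_succ, hb]
    simp
  · obtain ⟨k, rfl⟩ : ∃ k : ℕ, m = -k := ⟨(-m).toNat, by omega⟩
    have hb : bext b (1 - -k) = b (k + 1) := by
      rw [bext, if_pos (by omega), sub_neg_eq_add, add_comm]
    rw [show -(k : ℤ) - 1 = -((k + 1 : ℕ) : ℤ) by push_cast; ring, eSer_neg_natCast,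
      eSer_neg_natCast, prod_range_succ, hb, mul_assoc]
    push_cast
    rw [geomSeries_mul_one_sub_C_mul_X, mul_one]

lemma eSer_neg_shift (n : ℕ) (c : ℕ → R) :
    eSer (-n) (fun i => c (i + 1)) = (1 - C (c 1) * X) * eSer (-n - 1) c := by
  rw [show -(n : ℤ) - 1 = -((n + 1 : ℕ) : ℤ) by push_cast; ring, eSer_neg_natCast,
    eSer_neg_natCast, prod_range_succ', zero_add, mul_left_comm,
    one_sub_C_mul_X_mul_geomSeries, mul_one]

lemma qC_eq_qC_sub_one_sub (l m : ℤ) (n₀ : ℕ) (x : ℕ → R) (b : ℤ → R) :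
    qC l m n₀ x (fun i => b i) = qC l (m - 1) n₀ x (fun i => b i) -
      bext b (1 - m) * qC (l - 1) (m - 1) n₀ x (fun i => b i) := by
  rw [qC, eSer_eq_eSer_sub_one_mul, ← mul_assoc, mul_comm _ (1 - _), coeffZ_one_sub_C_mul_X_mul,
    qC, qC]

lemma eC_neg_shift (j : ℤ) (n : ℕ) (c : ℕ → R) :
    eC j (-n) (fun i => c (i + 1)) = eC j (-n - 1) c - c 1 * eC (j - 1) (-n - 1) c := by
  rw [eC, eSer_neg_shift, coeffZ_one_sub_C_mul_X_mul, eC, eC]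

lemma qC_of_neg {l : ℤ} (hl : l < 0) (m : ℤ) (n₀ : ℕ) (x c : ℕ → R) : qC l m n₀ x c = 0 := by
  simp [qC, coeffZ, hl.not_ge]

lemma finsum_mem_le_eq_sum_Icc {M : Type*} [AddCommMonoid M] {g : ℤ → M} {a : ℤ}
    (hg : ∀ l < a, g l = 0) (s : ℤ) :
    ∑ᶠ l ∈ {l : ℤ | l ≤ s}, g l = ∑ l ∈ Icc a s, g l := by
  refine finsum_mem_eq_sum_of_inter_support_eq _ (Set.ext fun l => ?_)
  simp only [Set.mem_inter_iff, Function.mem_support, coe_Icc, Set.mem_Icc]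
  exact ⟨fun ⟨hs, hl⟩ => ⟨⟨not_lt.1 (mt (hg l) hl), hs⟩, hl⟩, fun ⟨⟨_, hs⟩, hl⟩ => ⟨hs, hl⟩⟩

lemma sum_Icc_sub_one_mul {F : ℤ → R} {a : ℤ} (hF : F (a - 1) = 0) (G : ℤ → R) {s : ℤ}
    (has : a ≤ s) : ∑ l ∈ Icc a s, F (l - 1) * G l = ∑ l ∈ Icc a (s - 1), F l * G (l + 1) := by
  have hmap := map_add_right_Icc (a - 1) (s - 1) (1 : ℤ)
  rw [sub_add_cancel, sub_add_cancel] at hmap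
  rw [← hmap, sum_map, ← insert_Icc_left_eq_Icc_sub_one (by omega), sum_insert (by simp)]
  simp [hF]

lemma sum_Icc_sub_mul_eq_add_sum {F : ℤ → R} {a : ℤ} (hF : ∀ l < a, F l = 0) (B : ℤ → R)
    (c : R) (s t : ℤ) :
    ∑ l ∈ Icc a s, (F l - c * F (l - 1)) * B (t - l) =
      F s * B (t - s) + ∑ l ∈ Icc a (s - 1), F l * (B (t - l) - c * B (t - l - 1)) := by
  rcases lt_or_ge s a with hs | hs
  · simp [hF s hs, Icc_eq_empty_of_lt hs, Icc_eq_empty_of_lt (show s - 1 < a by omega)]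
  have hshift := sum_Icc_sub_one_mul (hF (a - 1) (by omega)) (fun l => B (t - l)) hs
  simp only [sub_mul, mul_sub, sum_sub_distrib, mul_assoc, ← mul_sum, mul_left_comm _ c]
  rw [hshift, ← insert_Icc_sub_one_right_eq_Icc hs, sum_insert (by simp)]
  simp only [sub_add_eq_sub_sub]
  ring

/-- For all `s, t, m ∈ ℤ` and `n ≥ 0`:
`Σ_{ℓ ≤ s} q_ℓ^{[m]} · (e_{t−ℓ}^{[−n−1]}(τ^{−m}b))^⋆
 = q_s^{[m−1]} · (e_{t−s}^{[−n−1]}(τ^{−m}b))^⋆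
   + Σ_{ℓ ≤ s−1} q_ℓ^{[m−1]} · (e_{t−ℓ}^{[−n]}(τ^{1−m}b))^⋆`,
for every number `n₀` of x-variables. -/
theorem statement_6 (R : Type*) [CommRing R] (n₀ : ℕ) (x : ℕ → R) (b : ℤ → R)
    (s t m : ℤ) (n : ℕ) :
    ∑ᶠ l ∈ {l : ℤ | l ≤ s},
        qC l m n₀ x (fun i => b (i : ℤ)) *
          eC (t - l) (-(n : ℤ) - 1) (fun i => bext b ((i : ℤ) - m)) =
      qC s (m - 1) n₀ x (fun i => b (i : ℤ)) *
          eC (t - s) (-(n : ℤ) - 1) (fun i => bext b ((i : ℤ) - m)) +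
        ∑ᶠ l ∈ {l : ℤ | l ≤ s - 1},
          qC l (m - 1) n₀ x (fun i => b (i : ℤ)) *
            eC (t - l) (-(n : ℤ)) (fun i => bext b ((i : ℤ) + 1 - m)) := by
  have hq : ∀ l, qC l m n₀ x (fun i => b i) =
      qC l (m - 1) n₀ x (fun i => b i) - bext b (1 - m) * qC (l - 1) (m - 1) n₀ x (fun i => b i) :=
    fun l => qC_eq_qC_sub_one_sub l m n₀ x b
  have he : ∀ j, eC j (-(n : ℤ)) (fun i => bext b ((i : ℤ) + 1 - m)) =
      eC j (-(n : ℤ) - 1) (fun i => bext b ((i : ℤ) - m)) -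
        bext b (1 - m) * eC (j - 1) (-(n : ℤ) - 1) (fun i => bext b ((i : ℤ) - m)) := fun j => by
    simpa [add_sub_right_comm] using eC_neg_shift j n fun i => bext b ((i : ℤ) - m)
  rw [finsum_mem_le_eq_sum_Icc (a := 0) (fun l hl => by simp [qC_of_neg hl]),
    finsum_mem_le_eq_sum_Icc (a := 0) (fun l hl => by simp [qC_of_neg hl])]
  simp only [hq, he]
  exact sum_Icc_sub_mul_eq_add_sum (F := fun l => qC l (m - 1) n₀ x (fun i => b i))
    (fun l hl => qC_of_neg hl _ _ _ _) (fun j => eC j (-(n : ℤ) - 1) fun i => bext b ((i : ℤ) - m))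
    _ s t
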